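/- Let C_n be the cycle graph on n ≥ 3 vertices. Every divisor D on C_n of degree 1 is linearly equivalent to the indicator divisor of a single vertex; that is, there exist a vertex v and f : V → ℤ such that D − L f takes the value 1 at v and 0 at every other vertex. Consequently, every divisor of degree ≥ 1 on C_n is linearly equivalent to an effective divisor. -/

import Mathlib

open Finset

/-- The degree of a vertex of a simple graph: the number of its neighbors. -/
noncomputable def degS {V : Type*} (G : SimpleGraph V) (v : V) : ℕ :=
  {u | G.Adj v u}.ncard

open Classical in
/-- The Laplacian matrix of a simple graph `G`:
`L v v = deg v`, `L v w = -1` if `v w` is an edge, and `0` otherwise. -/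
noncomputable def lapS {V : Type*} (G : SimpleGraph V) (v w : V) : ℤ :=
  if v = w then (degS G v : ℤ) else if G.Adj v w then -1 else 0

/-- The Laplacian applied to a firing function `f`, evaluated at `v`. -/
noncomputable def lapApplyS {V : Type*} [Fintype V] (G : SimpleGraph V)
    (f : V → ℤ) (v : V) : ℤ :=
  ∑ w, lapS G v w * f w

/-- A divisor is winnable if it is linearly equivalent to an effective divisor. -/
def WinnableS {V : Type*} [Fintype V] (G : SimpleGraph V) (D : V → ℤ) : Prop :=
  ∃ f : V → ℤ, ∀ v, 0 ≤ D v - lapApplyS G f v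

/-- The Baker–Norine rank of a divisor on a simple graph. -/
noncomputable def rankS {V : Type*} [Fintype V] (G : SimpleGraph V) (D : V → ℤ) : ℤ :=
  sSup {r : ℤ | ∀ E : V → ℤ, (∀ v, 0 ≤ E v) → (∑ v, E v) = r →
    WinnableS G (fun v => D v - E v)}

/-! On `C_n` the principal divisor `L δ_v` is `2·v - (v - 1) - (v + 1)`, so in the
Picard group all differences `[v + 1] - [v]` equal `g = [1] - [0]`. Hence `[k] = [0] + k • g`,
`n • g = 0`, and a divisor `D` of degree `1` has class `[0] + s • g = [s mod n]`, where
`s = ∑ v, v * D v` is its first moment. For degree `d ≥ 1`, the same applied to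
`D - (d - 1)·[0]` exhibits an effective divisor equivalent to `D`. -/

theorem degS_eq_degree {V : Type*} (G : SimpleGraph V) (v : V) [Fintype (G.neighborSet v)] :
    degS G v = G.degree v := by
  rw [degS, ← SimpleGraph.card_neighborFinset_eq_degree]
  exact Set.ncard_eq_toFinset_card' (G.neighborSet v)

section Picard

variable {V : Type*} [Fintype V]

theorem lapApplyS_eq_degree_mul_sub_sum (G : SimpleGraph V) [DecidableRel G.Adj]
    (f : V → ℤ) (v : V) :
    lapApplyS G f v = G.degree v * f v - ∑ w ∈ G.neighborFinset v, f w := by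
  classical
  have hsplit : ∀ w, lapS G v w * f w =
      (if v = w then (G.degree v : ℤ) * f w else 0) - if G.Adj v w then f w else 0 := by
    intro w
    unfold lapS
    by_cases hvw : v = w
    · subst hvw; simp [degS_eq_degree]
    · by_cases hadj : G.Adj v w <;> simp [hvw, hadj]
  simp only [lapApplyS, hsplit, sum_sub_distrib, sum_ite_eq, mem_univ, if_true, ← sum_filter]
  congr 2
  ext w; simp

noncomputable def laplacianHom (G : SimpleGraph V) : (V → ℤ) →+ (V → ℤ) where
  toFun := lapApplyS G
  map_zero' := by ext; simp [lapApplyS]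
  map_add' f g := by ext; simp [lapApplyS, mul_add, sum_add_distrib]

abbrev Pic (G : SimpleGraph V) : Type _ :=
  (V → ℤ) ⧸ (laplacianHom G).range

theorem Pic.mk_eq_mk_iff {G : SimpleGraph V} {D D' : V → ℤ} :
    (D : Pic G) = D' ↔ ∃ f : V → ℤ, ∀ v, D v - lapApplyS G f v = D' v := by
  rw [QuotientAddGroup.eq_iff_sub_mem, AddMonoidHom.mem_range]
  refine exists_congr fun f => ⟨fun h v => ?_, fun h => funext fun v => ?_⟩
  · have := congrFun h v
    simp only [laplacianHom, AddMonoidHom.coe_mk, ZeroHom.coe_mk, Pi.sub_apply] at this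
    omega
  · simp only [laplacianHom, AddMonoidHom.coe_mk, ZeroHom.coe_mk, Pi.sub_apply]
    have := h v
    omega

theorem winnableS_of_mk_eq {G : SimpleGraph V} {D E : V → ℤ}
    (hE : 0 ≤ E) (h : (D : Pic G) = E) : WinnableS G D := by
  obtain ⟨f, hf⟩ := Pic.mk_eq_mk_iff.1 h
  exact ⟨f, fun v => hf v ▸ hE v⟩

noncomputable def vertexClass [DecidableEq V] (G : SimpleGraph V) (v : V) : Pic G :=
  (Pi.single v 1 : V → ℤ)

theorem Pic.mk_eq_sum_zsmul_vertexClass [DecidableEq V] (G : SimpleGraph V) (D : V → ℤ) :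
    (D : Pic G) = ∑ v, D v • vertexClass G v := by
  conv_lhs => rw [← Finset.univ_sum_single D]
  simp only [vertexClass, ← QuotientAddGroup.mk_zsmul, ← QuotientAddGroup.mk_sum,
    ← Pi.single_smul, smul_eq_mul, mul_one]

theorem winnableS_of_one_le_sum [DecidableEq V] {G : SimpleGraph V}
    (hG : ∀ D : V → ℤ, ∑ v, D v = 1 → ∃ u, (D : Pic G) = vertexClass G u)
    (u₀ : V) {D : V → ℤ} (hD : 1 ≤ ∑ v, D v) : WinnableS G D := by
  set d := ∑ v, D v
  obtain ⟨u, hu⟩ := hG (D - (d - 1) • Pi.single u₀ 1) <| by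
    simp [sum_sub_distrib, Pi.single_apply, d]
  refine winnableS_of_mk_eq (E := Pi.single u 1 + (d - 1) • Pi.single u₀ 1) ?_ ?_
  · have hd : (0 : ℤ) ≤ d - 1 := by omega
    intro v
    simp only [Pi.add_apply, Pi.smul_apply, Pi.zero_apply, smul_eq_mul, Pi.single_apply]
    split_ifs <;> omega
  · rw [QuotientAddGroup.mk_add,
      show ((Pi.single u 1 : V → ℤ) : Pic G) = vertexClass G u from rfl, ← hu,
      ← QuotientAddGroup.mk_add, sub_add_cancel]

end Picard

section Cycle

open SimpleGraph Fin.NatCast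

variable {m : ℕ}

local notation "C" => cycleGraph (m + 3)

theorem lapApplyS_cycleGraph (f : Fin (m + 3) → ℤ) (v : Fin (m + 3)) :
    lapApplyS C f v = 2 * f v - f (v - 1) - f (v + 1) := by
  have hne : v - 1 ≠ v + 1 := by
    have := cycleGraph_degree_three_le (n := m) (v := v)
    rw [cycleGraph_degree_two_le] at this
    intro h; rw [h] at this; simp at this
  rw [lapApplyS_eq_degree_mul_sub_sum, cycleGraph_degree_three_le,
    cycleGraph_neighborFinset, sum_pair hne]
  push_cast; ring

theorem cycleGraph_vertexClass_add_one_sub (v : Fin (m + 3)) :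
    vertexClass C (v + 1) - vertexClass C v = vertexClass C v - vertexClass C (v - 1) := by
  have hL : (Pi.single (v + 1) 1 - Pi.single v 1) - (Pi.single v 1 - Pi.single (v - 1) 1) =
      -laplacianHom C (Pi.single v 1) := by
    ext w
    simp only [laplacianHom, AddMonoidHom.coe_mk, ZeroHom.coe_mk, lapApplyS_cycleGraph,
      Pi.sub_apply, Pi.neg_apply, Pi.single_apply, sub_eq_iff_eq_add, eq_sub_iff_add_eq]
    split_ifs <;> omega
  refine sub_eq_zero.1 ?_
  simp only [vertexClass, ← QuotientAddGroup.mk_sub, hL, QuotientAddGroup.mk_neg,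
    (QuotientAddGroup.eq_zero_iff _).2 (AddMonoidHom.mem_range.2 ⟨_, rfl⟩), neg_zero]

theorem cycleGraph_vertexClass_natCast (k : ℕ) :
    vertexClass C (k : Fin (m + 3)) =
      vertexClass C 0 + k • (vertexClass C 1 - vertexClass C 0) := by
  have hstep : ∀ k : ℕ,
      vertexClass C ((k : Fin (m + 3)) + 1) - vertexClass C (k : Fin (m + 3)) =
        vertexClass C 1 - vertexClass C 0 := by
    intro k
    induction k with
    | zero => simp
    | succ k ih =>
      rw [Nat.cast_succ, cycleGraph_vertexClass_add_one_sub, add_sub_cancel_right, ih]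
  induction k with
  | zero => simp
  | succ k ih => rw [succ_nsmul, ← add_assoc, ← ih, ← hstep k, Nat.cast_succ, add_sub_cancel]

theorem cycleGraph_nsmul_vertexClass_sub_eq_zero :
    (m + 3) • (vertexClass C 1 - vertexClass C 0) = 0 := by
  have := cycleGraph_vertexClass_natCast (m := m) (m + 3)
  rwa [Fin.natCast_self, left_eq_add] at this

theorem cycleGraph_exists_mk_eq_vertexClass {D : Fin (m + 3) → ℤ} (hD : ∑ v, D v = 1) :
    ∃ u, (D : Pic C) = vertexClass C u := by
  set g := vertexClass C 1 - vertexClass C 0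
  set s := ∑ v, D v * v.val
  have hclass : (D : Pic C) = vertexClass C 0 + s • g := by
    have hv : ∀ v : Fin (m + 3), vertexClass C v = vertexClass C 0 + (v.val : ℤ) • g := by
      intro v
      rw [natCast_zsmul, ← cycleGraph_vertexClass_natCast, Fin.cast_val_eq_self]
    rw [Pic.mk_eq_sum_zsmul_vertexClass, sum_congr rfl fun v _ => congrArg (D v • ·) (hv v)]
    -- `Finset.sum_smul` does not fire: the `ℤ`-action on a quotient group is not reducibly
    -- the one of `AddCommGroup.toIntModule`.
    have hsum : ∀ (c : Fin (m + 3) → ℤ) (x : Pic C), ∑ v, c v • x = (∑ v, c v) • x :=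
      fun c x => (map_sum (zmultiplesHom _ x) c univ).symm
    simp only [zsmul_add, sum_add_distrib, ← mul_zsmul, hsum, hD, one_zsmul, s]
  obtain ⟨r, q, hs⟩ : ∃ (r : ℕ) (q : ℤ), s = r + ((m + 3 : ℕ) : ℤ) * q :=
    ⟨(s % (m + 3 : ℕ)).toNat, s / (m + 3 : ℕ), by
      rw [Int.toNat_of_nonneg (Int.emod_nonneg _ (by omega)), Int.emod_add_mul_ediv]⟩
  refine ⟨(r : Fin (m + 3)), ?_⟩
  rw [hclass, cycleGraph_vertexClass_natCast, hs, add_zsmul, mul_zsmul', natCast_zsmul,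
    natCast_zsmul, cycleGraph_nsmul_vertexClass_sub_eq_zero, zsmul_zero, add_zero]

end Cycle

/-- On the cycle graph `C n` (`n ≥ 3`), every divisor of degree `1` is linearly
equivalent to the indicator divisor of a single vertex; consequently every divisor of
degree at least `1` is linearly equivalent to an effective divisor. -/
theorem cycle_degree_one_equiv_vertex (n : ℕ) (hn : 3 ≤ n) :
    (∀ D : Fin n → ℤ, (∑ v, D v) = 1 →
      ∃ (v : Fin n) (f : Fin n → ℤ), ∀ w,
        D w - lapApplyS (SimpleGraph.cycleGraph n) f w = if w = v then 1 else 0) ∧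
    (∀ D : Fin n → ℤ, 1 ≤ ∑ v, D v →
      ∃ f : Fin n → ℤ, ∀ w, 0 ≤ D w - lapApplyS (SimpleGraph.cycleGraph n) f w) := by
  obtain ⟨m, rfl⟩ : ∃ m, n = m + 3 := ⟨n - 3, by omega⟩
  refine ⟨fun D hD => ?_, fun D hD => winnableS_of_one_le_sum
    (fun D hD => cycleGraph_exists_mk_eq_vertexClass hD) 0 hD⟩
  obtain ⟨v, hv⟩ := cycleGraph_exists_mk_eq_vertexClass hD
  obtain ⟨f, hf⟩ := Pic.mk_eq_mk_iff.1 hv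
  exact ⟨v, f, fun w => by rw [hf, Pi.single_apply]⟩
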